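/- arXiv:1904.11854 — 3 statements merged into one kernel-verified Lean document; each statement's English description precedes it below -/
import Mathlib

section
/- Let A be a bounded self-adjoint operator on a complex separable Hilbert space H and let T_1, …, T_N (N finite) be bounded positive operators on H with T_1 + ⋯ + T_N = I. Let ω_1, …, ω_N be independent real random variables, ω_n distributed with density ρ_n. Set A^ω = A + Σ_{n=1}^N ω_n T_n. Suppose f is a complex-valued function on the bounded operators on H such that (ω_1, …, ω_N, E) ↦ f(A^ω − E·I) is a bounded measurable function on ℝ^{N+1}. If for each n one has ρ_n ∈ C^m(ℝ) and ρ_n^{(k)} ∈ L¹(ℝ) for all 0 ≤ k ≤ m, then the function h(E) = E_ω[f(A^ω − E·I)] = ∫_{ℝ^N} f(A + Σ_{n=1}^N (ω_n − E) T_n) ∏_{n=1}^N ρ_n(ω_n) dω_n is of class C^m on ℝ. -/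
open MeasureTheory Complex ContinuousLinearMap

/-!
Substituting `ω ↦ ω + E • 1` moves the energy out of the merely bounded function `f` and into
the densities: `h E = ∫ (∏ n, ρ n (ω n + E)) • g ω` with `g ω = f (A + ∑ n, ω n • T n)`.
Since translation is continuous on `L¹` and `Φ ↦ ∫ Φ • g` is Lipschitz on `L¹` for bounded `g`,
such an integral is continuous in `E`. Differentiating it costs only the fundamental theorem of
calculus in `E` followed by Fubini, and the derivative has the same shape, a sum over `n` of
integrals in which the factor `ρ n` is replaced by `ρ n'`; induction on `m` concludes.
-/

open scoped ENNReal

section IntegralAgainstBounded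

variable {α F : Type*} [MeasurableSpace α] {μ : Measure α} [NormedAddCommGroup F]
  [NormedSpace ℝ F] {g : α → F} {M : ℝ}

theorem norm_integral_smul_le_of_norm_le {Φ : α → ℝ} (hΦ : Integrable Φ μ)
    (hgb : ∀ x, ‖g x‖ ≤ M) : ‖∫ x, Φ x • g x ∂μ‖ ≤ M * ∫ x, ‖Φ x‖ ∂μ := by
  rw [← integral_const_mul]
  refine norm_integral_le_of_norm_le (hΦ.norm.const_mul M) (.of_forall fun x => ?_)
  rw [norm_smul, mul_comm]
  exact mul_le_mul_of_nonneg_right (hgb x) (norm_nonneg _)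

theorem lipschitzWith_integral_smul (hg : AEStronglyMeasurable g μ) (hgb : ∀ x, ‖g x‖ ≤ M) :
    LipschitzWith M.toNNReal (fun Φ : α →₁[μ] ℝ => ∫ x, Φ x • g x ∂μ) := by
  refine LipschitzWith.of_dist_le' fun Φ Ψ => ?_
  have hint (Φ : α →₁[μ] ℝ) : Integrable (fun x => Φ x • g x) μ :=
    (L1.integrable_coeFn Φ).smul_bdd M hg (.of_forall hgb)
  calc dist (∫ x, Φ x • g x ∂μ) (∫ x, Ψ x • g x ∂μ)
      = ‖∫ x, (Φ - Ψ) x • g x ∂μ‖ := by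
        rw [dist_eq_norm, ← integral_sub (hint Φ) (hint Ψ)]
        refine congrArg _ (integral_congr_ae ?_)
        filter_upwards [Lp.coeFn_sub Φ Ψ] with x hx
        rw [hx, Pi.sub_apply, sub_smul]
    _ ≤ M * ∫ x, ‖(Φ - Ψ) x‖ ∂μ := norm_integral_smul_le_of_norm_le (L1.integrable_coeFn _) hgb
    _ = M * dist Φ Ψ := by rw [dist_eq_norm, L1.norm_eq_integral_norm]

end IntegralAgainstBounded

section Translation

variable {V F : Type*} [NormedAddCommGroup V] [NormedSpace ℝ V] [FiniteDimensional ℝ V]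
  [MeasurableSpace V] [BorelSpace V] {μ : Measure V} [μ.IsAddHaarMeasure]
  [NormedAddCommGroup F] [NormedSpace ℝ F] {g : V → F} {M : ℝ} {Φ Ψ : V → ℝ}

theorem continuous_integral_comp_add_right_smul (hΦ : Integrable Φ μ)
    (hg : AEStronglyMeasurable g μ) (hgb : ∀ x, ‖g x‖ ≤ M) :
    Continuous fun y => ∫ x, Φ (x + y) • g x ∂μ := by
  have : Fact ((1 : ℝ≥0∞) ≤ 1) := ⟨le_rfl⟩
  let addRight : C(V, C(V, V)) := (⟨fun p : V × V => p.2 + p.1, by fun_prop⟩ : C(V × V, V)).curry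
  let translate : V → V →₁[μ] ℝ := fun y =>
    Lp.compMeasurePreserving (addRight y) (measurePreserving_add_right μ y) (hΦ.toL1 Φ)
  have htranslate : Continuous translate :=
    continuous_const.compMeasurePreservingLp addRight.continuous _ ENNReal.one_ne_top
  have htranslate_ae (y : V) : translate y =ᵐ[μ] fun x => Φ (x + y) :=
    (Lp.coeFn_compMeasurePreserving _ _).trans
      ((measurePreserving_add_right μ y).quasiMeasurePreserving.ae_eq_comp hΦ.coeFn_toL1)
  convert (lipschitzWith_integral_smul hg hgb).continuous.comp htranslate using 1
  funext y
  refine integral_congr_ae ?_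
  filter_upwards [htranslate_ae y] with x hx
  simp [hx]

theorem integrable_prod_comp_add_smul {ν : Measure ℝ} [IsFiniteMeasure ν] (hΨ : Integrable Ψ μ)
    (hΨc : Continuous Ψ) (v : V) (hg : AEStronglyMeasurable g μ) (hgb : ∀ x, ‖g x‖ ≤ M) :
    Integrable (fun p : ℝ × V => Ψ (p.2 + p.1 • v) • g p.2) (ν.prod μ) := by
  refine Integrable.smul_bdd ?_ M hg.comp_snd (.of_forall fun p => hgb p.2)
  have hmeas : AEStronglyMeasurable (fun p : ℝ × V => Ψ (p.2 + p.1 • v)) (ν.prod μ) :=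
    (by fun_prop : Continuous fun p : ℝ × V => Ψ (p.2 + p.1 • v)).aestronglyMeasurable
  refine (integrable_prod_iff hmeas).2 ⟨.of_forall fun t => hΨ.comp_add_right (t • v), ?_⟩
  simp_rw [integral_add_right_eq_self (fun x => ‖Ψ x‖)]
  exact integrable_const _

theorem hasDerivAt_integral_comp_add_smul [CompleteSpace F] (hΦ : Integrable Φ μ)
    (hΨ : Integrable Ψ μ) (hΨc : Continuous Ψ) (v : V)
    (hΦΨ : ∀ x (t : ℝ), HasDerivAt (fun s => Φ (x + s • v)) (Ψ (x + t • v)) t)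
    (hg : AEStronglyMeasurable g μ) (hgb : ∀ x, ‖g x‖ ≤ M) (E : ℝ) :
    HasDerivAt (fun t => ∫ x, Φ (x + t • v) • g x ∂μ) (∫ x, Ψ (x + E • v) • g x ∂μ) E := by
  set S : ℝ → F := fun t => ∫ x, Ψ (x + t • v) • g x ∂μ
  have hS : Continuous S :=
    (continuous_integral_comp_add_right_smul hΨ hg hgb).comp (by fun_prop)
  have hint (t : ℝ) : Integrable (fun x => Φ (x + t • v) • g x) μ :=
    (hΦ.comp_add_right _).smul_bdd M hg (.of_forall hgb)
  have hFTC (t : ℝ) : ∫ x, Φ (x + t • v) • g x ∂μ = ∫ x, Φ x • g x ∂μ + ∫ s in 0..t, S s := by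
    have hslice (x : V) : ∫ s in 0..t, Ψ (x + s • v) • g x = (Φ (x + t • v) - Φ x) • g x := by
      have hΨx : Continuous fun s : ℝ => Ψ (x + s • v) := by fun_prop
      rw [intervalIntegral.integral_smul_const, intervalIntegral.integral_eq_sub_of_hasDerivAt
        (fun s _ => hΦΨ x s) (hΨx.intervalIntegrable 0 t), zero_smul, add_zero]
    have : IsFiniteMeasure (volume.restrict (Set.uIoc 0 t)) := isFiniteMeasure_restrict.2 (by simp)
    rw [intervalIntegral_integral_swap (integrable_prod_comp_add_smul hΨ hΨc v hg hgb)]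
    simp_rw [hslice, sub_smul]
    rw [integral_sub (hint t) (by simpa using hint 0), add_sub_cancel]
  rw [funext hFTC]
  exact (hS.integral_hasStrictDerivAt 0 E).hasDerivAt.const_add _

end Translation

def ContDiffIntegrable (m : ℕ) (φ : ℝ → ℝ) : Prop :=
  ContDiff ℝ m φ ∧ ∀ k ≤ m, Integrable (iteratedDeriv k φ)

namespace ContDiffIntegrable

variable {m : ℕ} {φ : ℝ → ℝ}

theorem integrable (h : ContDiffIntegrable m φ) : Integrable φ := by
  simpa using h.2 0 m.zero_le

theorem continuous (h : ContDiffIntegrable m φ) : Continuous φ :=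
  h.1.continuous

theorem contDiff_succ (h : ContDiffIntegrable (m + 1) φ) :
    ContDiff ℝ ((m : WithTop ℕ∞) + 1) φ :=
  mod_cast h.1

theorem of_succ (h : ContDiffIntegrable (m + 1) φ) : ContDiffIntegrable m φ :=
  ⟨h.contDiff_succ.of_succ, fun k hk => h.2 k (hk.trans m.le_succ)⟩

theorem deriv (h : ContDiffIntegrable (m + 1) φ) : ContDiffIntegrable m (deriv φ) :=
  ⟨(contDiff_succ_iff_deriv.1 h.contDiff_succ).2.2, fun k hk => by
    simpa [iteratedDeriv_succ'] using h.2 (k + 1) (by omega)⟩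

theorem differentiable (h : ContDiffIntegrable (m + 1) φ) : Differentiable ℝ φ :=
  h.contDiff_succ.differentiable (by simp)

end ContDiffIntegrable

section Product

variable {ι : Type*} [Fintype ι] [DecidableEq ι]

theorem hasDerivAt_prod_comp_add {φ : ι → ℝ → ℝ} (hφ : ∀ n, Differentiable ℝ (φ n))
    (x : ι → ℝ) (t : ℝ) :
    HasDerivAt (fun s => ∏ n, φ n (x n + s))
      (∑ n, ∏ j, Function.update φ n (deriv (φ n)) j (x j + t)) t := by
  have hfactor (n : ι) : HasDerivAt (fun s => φ n (x n + s)) (deriv (φ n) (x n + t)) t :=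
    ((hφ n) _).hasDerivAt.comp_const_add (x n) t
  refine (HasDerivAt.fun_finsetProd (u := Finset.univ) fun n _ => hfactor n).congr_deriv ?_
  refine Finset.sum_congr rfl fun n _ => ?_
  rw [← Finset.mul_prod_erase _ _ (Finset.mem_univ n), Function.update_self, smul_eq_mul,
    mul_comm]
  congr 1
  exact Finset.prod_congr rfl fun j hj => by
    rw [Function.update_of_ne (Finset.ne_of_mem_erase hj)]

variable {F : Type*} [NormedAddCommGroup F] [NormedSpace ℝ F] [CompleteSpace F]
  {g : (ι → ℝ) → F} {M : ℝ}

theorem contDiff_integral_prod_comp_add_smul (hg : AEStronglyMeasurable g) (hgb : ∀ x, ‖g x‖ ≤ M)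
    (m : ℕ) (φ : ι → ℝ → ℝ) (hφ : ∀ n, ContDiffIntegrable m (φ n)) :
    ContDiff ℝ m (fun E => ∫ x, (∏ n, φ n (x n + E)) • g x) := by
  induction m generalizing φ with
  | zero =>
    rw [Nat.cast_zero, contDiff_zero]
    have hprod : Integrable (fun x : ι → ℝ => ∏ n, φ n (x n)) :=
      Integrable.fintype_prod fun n => (hφ n).integrable
    exact (continuous_integral_comp_add_right_smul hprod hg hgb).comp
      (continuous_pi fun _ => continuous_id)
  | succ m ih =>
    let φ' : ι → ι → ℝ → ℝ := fun n => Function.update φ n (deriv (φ n))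
    have hφ' (n : ι) : ∀ j, ContDiffIntegrable m (φ' n j) :=
      (Function.forall_update_iff φ fun _ ψ => ContDiffIntegrable m ψ).2
        ⟨(hφ n).deriv, fun j _ => (hφ j).of_succ⟩
    have hderiv (E : ℝ) : HasDerivAt (fun E => ∫ x, (∏ n, φ n (x n + E)) • g x)
        (∑ n, ∫ x, (∏ j, φ' n j (x j + E)) • g x) E := by
      have hΨ : Integrable (fun x : ι → ℝ => ∑ n, ∏ j, φ' n j (x j)) :=
        integrable_finsetSum _ fun n _ => Integrable.fintype_prod fun j => (hφ' n j).integrable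
      have hΨc : Continuous (fun x : ι → ℝ => ∑ n, ∏ j, φ' n j (x j)) :=
        continuous_finsetSum _ fun n _ => continuous_finsetProd _ fun j _ =>
          (hφ' n j).continuous.comp (continuous_apply j)
      have hprod : Integrable (fun x : ι → ℝ => ∏ n, φ n (x n)) :=
        Integrable.fintype_prod fun n => (hφ n).integrable
      have := hasDerivAt_integral_comp_add_smul hprod hΨ hΨc (fun _ => 1)
        (fun x t => by simpa using hasDerivAt_prod_comp_add (fun n => (hφ n).differentiable) x t)
        hg hgb E
      simp only [Pi.add_apply, Pi.smul_apply, smul_eq_mul, mul_one, Finset.sum_smul] at this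
      have hint (n : ι) : Integrable (fun x : ι → ℝ => (∏ j, φ' n j (x j + E)) • g x) :=
        ((Integrable.fintype_prod fun j => (hφ' n j).integrable).comp_add_right
          fun _ => E).smul_bdd M hg (.of_forall hgb)
      rwa [integral_finsetSum _ fun n _ => hint n] at this
    rw [Nat.cast_succ, contDiff_succ_iff_deriv]
    refine ⟨fun E => (hderiv E).differentiableAt, by simp, ?_⟩
    rw [funext fun E => (hderiv E).deriv]
    exact ContDiff.sum fun n _ => ih (φ' n) (hφ' n)

end Product

theorem statement0_general
    (H : Type*) [NormedAddCommGroup H] [InnerProductSpace ℂ H]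
    (N : ℕ) (m : ℕ)
    (A : H →L[ℂ] H)
    (T : Fin N → (H →L[ℂ] H))
    (ρ : Fin N → ℝ → ℝ)
    (hρsmooth : ∀ n, ContDiff ℝ m (ρ n))
    (hρL1 : ∀ n, ∀ k ≤ m, Integrable (iteratedDeriv k (ρ n)))
    (f : (H →L[ℂ] H) → ℂ)
    (hfmeas : Measurable (fun p : (Fin N → ℝ) × ℝ =>
      f (A + ∑ n, (p.1 n - p.2) • T n)))
    (hfbdd : ∃ M : ℝ, ∀ p : (Fin N → ℝ) × ℝ,
      ‖f (A + ∑ n, (p.1 n - p.2) • T n)‖ ≤ M) :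
    ContDiff ℝ m (fun E : ℝ =>
      ∫ ω : Fin N → ℝ, (∏ n, ρ n (ω n)) • f (A + ∑ n, (ω n - E) • T n)) := by
  obtain ⟨M, hM⟩ := hfbdd
  let g : (Fin N → ℝ) → ℂ := fun ω => f (A + ∑ n, ω n • T n)
  have hg : Measurable g := by
    simpa [g, Function.comp_def] using
      hfmeas.comp (measurable_id.prodMk (measurable_const (a := (0 : ℝ))))
  have hgb (ω : Fin N → ℝ) : ‖g ω‖ ≤ M := by simpa [g] using hM (ω, 0)
  have hshift : (fun E : ℝ => ∫ ω : Fin N → ℝ, (∏ n, ρ n (ω n)) • f (A + ∑ n, (ω n - E) • T n)) =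
      fun E => ∫ ω, (∏ n, ρ n (ω n + E)) • g ω := by
    funext E
    rw [← integral_add_right_eq_self _ fun _ => E]
    simp [g]
  rw [hshift]
  exact contDiff_integral_prod_comp_add_smul hg.aestronglyMeasurable hgb m ρ
    fun n => ⟨hρsmooth n, hρL1 n⟩

/-- Smoothing by averaging over finitely many random couplings:
if `A` is a bounded self-adjoint operator, `T 1, …, T N` are bounded positive operators
summing to the identity, `f` is a complex valued function on bounded operators such that
`(ω, E) ↦ f (A + ∑ (ω n - E) • T n)` is bounded and measurable, and each density `ρ n`
is `C^m` with all derivatives up to order `m` integrable, then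
`h E = ∫ f (A + ∑ (ω n - E) • T n) ∏ ρ n (ω n) dω` is of class `C^m` on `ℝ`. -/
theorem statement0
    (H : Type*) [NormedAddCommGroup H] [InnerProductSpace ℂ H] [CompleteSpace H]
    [TopologicalSpace.SeparableSpace H]
    (N : ℕ) (m : ℕ)
    (A : H →L[ℂ] H) (hA : IsSelfAdjoint A)
    (T : Fin N → (H →L[ℂ] H))
    (hTpos : ∀ n, (T n).IsPositive)
    (hTsum : ∑ n, T n = 1)
    (ρ : Fin N → ℝ → ℝ)
    (hρpos : ∀ n x, 0 ≤ ρ n x)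
    (hρprob : ∀ n, ∫ x, ρ n x = 1)
    (hρsmooth : ∀ n, ContDiff ℝ m (ρ n))
    (hρL1 : ∀ n, ∀ k ≤ m, Integrable (iteratedDeriv k (ρ n)))
    (f : (H →L[ℂ] H) → ℂ)
    (hfmeas : Measurable (fun p : (Fin N → ℝ) × ℝ =>
      f (A + ∑ n, (p.1 n - p.2) • T n)))
    (hfbdd : ∃ M : ℝ, ∀ p : (Fin N → ℝ) × ℝ,
      ‖f (A + ∑ n, (p.1 n - p.2) • T n)‖ ≤ M) :
    ContDiff ℝ m (fun E : ℝ =>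
      ∫ ω : Fin N → ℝ, (∏ n, ρ n (ω n)) • f (A + ∑ n, (ω n - E) • T n)) :=
  statement0_general H N m A T ρ hρsmooth hρL1 f hfmeas hfbdd
end

section
/- Let A and B be bounded operators on a complex separable Hilbert space H which generate contraction semigroups, i.e. ‖e^{tA}‖ ≤ 1 and ‖e^{tB}‖ ≤ 1 for all t ≥ 0. Then for every 0 < s < 1 and every t ≥ 0, ‖e^{tA} − e^{tB}‖ ≤ 2^{1−s} t^s ‖A − B‖^s. -/
/-!
Put `f r = e^{(t-r)A} e^{rB}`. Then `f 0 = e^{tA}`, `f t = e^{tB}` and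
`f' r = e^{(t-r)A} (B - A) e^{rB}`, whose norm is at most `‖A - B‖` because both semigroups are
contractive; the mean value inequality gives `‖e^{tA} - e^{tB}‖ ≤ t ‖A - B‖`. Contractivity also
gives the trivial bound `2`, and `min x 2 ≤ 2^{1-s} x^s` interpolates between the two.
-/

section ExpSmul

variable {𝔸 : Type*} [NormedRing 𝔸] [NormedAlgebra ℂ 𝔸] [CompleteSpace 𝔸]

theorem hasDerivAt_exp_smul_mul_exp_smul (a b : 𝔸) (t r : ℝ) :
    HasDerivAt (fun u : ℝ => NormedSpace.exp (((t : ℂ) - u) • a) * NormedSpace.exp ((u : ℂ) • b))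
      (NormedSpace.exp (((t : ℂ) - r) • a) * (b - a) * NormedSpace.exp ((r : ℂ) • b)) r := by
  have hA := (hasDerivAt_exp_smul_const a ((t : ℂ) - r)).scomp r
      ((Complex.ofRealCLM.hasDerivAt (x := r)).const_sub (t : ℂ))
  have hB := (hasDerivAt_exp_smul_const' b (r : ℂ)).scomp r
      (Complex.ofRealCLM.hasDerivAt (x := r))
  refine (hA.mul hB).congr_deriv ?_
  simp only [Function.comp_apply, Complex.ofRealCLM_apply, Complex.ofReal_one, one_smul, neg_smul]
  noncomm_ring

theorem norm_exp_smul_sub_exp_smul_le {a b : 𝔸}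
    (ha : ∀ r : ℝ, 0 ≤ r → ‖NormedSpace.exp ((r : ℂ) • a)‖ ≤ 1)
    (hb : ∀ r : ℝ, 0 ≤ r → ‖NormedSpace.exp ((r : ℂ) • b)‖ ≤ 1) {t : ℝ} (ht : 0 ≤ t) :
    ‖NormedSpace.exp ((t : ℂ) • a) - NormedSpace.exp ((t : ℂ) • b)‖ ≤ t * ‖a - b‖ := by
  have hmean := norm_image_sub_le_of_norm_deriv_le_segment'
    (fun r _ => (hasDerivAt_exp_smul_mul_exp_smul a b t r).hasDerivWithinAt)
    (C := ‖a - b‖) (fun r hr => ?_) t ⟨ht, le_rfl⟩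
  · simpa [norm_sub_rev, mul_comm] using hmean
  · have hta : ‖NormedSpace.exp (((t : ℂ) - r) • a)‖ ≤ 1 := by
      exact_mod_cast ha (t - r) (by linarith [hr.2])
    calc _ ≤ ‖NormedSpace.exp (((t : ℂ) - r) • a)‖ * ‖b - a‖ * ‖NormedSpace.exp ((r : ℂ) • b)‖ :=
          norm_mul₃_le
      _ ≤ 1 * ‖b - a‖ * 1 := by gcongr; exact hb r hr.1
      _ = ‖a - b‖ := by rw [norm_sub_rev]; ring

end ExpSmul

theorem Real.min_le_rpow_mul_rpow {x y s : ℝ} (hx : 0 ≤ x) (hy : 0 ≤ y) (hs0 : 0 ≤ s)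
    (hs1 : s ≤ 1) :
    min x y ≤ y ^ (1 - s) * x ^ s := by
  have hm : 0 ≤ min x y := le_min hx hy
  calc min x y = (min x y) ^ (1 - s) * (min x y) ^ s := by
        rw [← Real.rpow_add' hm (by norm_num), sub_add_cancel, Real.rpow_one]
    _ ≤ y ^ (1 - s) * x ^ s := by
        gcongr
        exacts [min_le_right x y, min_le_left x y]

theorem statement5_general
    (H : Type*) [NormedAddCommGroup H] [InnerProductSpace ℂ H] [CompleteSpace H]
    (A B : H →L[ℂ] H)
    (hA : ∀ t : ℝ, 0 ≤ t → ‖NormedSpace.exp ((t : ℂ) • A)‖ ≤ 1)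
    (hB : ∀ t : ℝ, 0 ≤ t → ‖NormedSpace.exp ((t : ℂ) • B)‖ ≤ 1) :
    ∀ s : ℝ, 0 < s → s < 1 → ∀ t : ℝ, 0 ≤ t →
      ‖NormedSpace.exp ((t : ℂ) • A) - NormedSpace.exp ((t : ℂ) • B)‖
        ≤ 2 ^ (1 - s) * t ^ s * ‖A - B‖ ^ s := by
  intro s hs0 hs1 t ht
  have hlip := norm_exp_smul_sub_exp_smul_le hA hB ht
  have htwo : ‖NormedSpace.exp ((t : ℂ) • A) - NormedSpace.exp ((t : ℂ) • B)‖ ≤ 2 :=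
    (norm_sub_le _ _).trans (by linarith [hA t ht, hB t ht])
  calc _ ≤ min (t * ‖A - B‖) 2 := le_min hlip htwo
    _ ≤ 2 ^ (1 - s) * (t * ‖A - B‖) ^ s :=
        Real.min_le_rpow_mul_rpow (by positivity) zero_le_two hs0.le hs1.le
    _ = 2 ^ (1 - s) * t ^ s * ‖A - B‖ ^ s := by
        rw [Real.mul_rpow ht (norm_nonneg _), mul_assoc]

/-- If the bounded operators `A, B` generate contraction semigroups
(`‖e^{tA}‖ ≤ 1` and `‖e^{tB}‖ ≤ 1` for `t ≥ 0`), then for every `0 < s < 1` and `t ≥ 0`,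
`‖e^{tA} − e^{tB}‖ ≤ 2^{1−s} t^s ‖A − B‖^s`. -/
theorem statement5
    (H : Type*) [NormedAddCommGroup H] [InnerProductSpace ℂ H] [CompleteSpace H]
    [TopologicalSpace.SeparableSpace H]
    (A B : H →L[ℂ] H)
    (hA : ∀ t : ℝ, 0 ≤ t → ‖NormedSpace.exp ((t : ℂ) • A)‖ ≤ 1)
    (hB : ∀ t : ℝ, 0 ≤ t → ‖NormedSpace.exp ((t : ℂ) • B)‖ ≤ 1) :
    ∀ s : ℝ, 0 < s → s < 1 → ∀ t : ℝ, 0 ≤ t →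
      ‖NormedSpace.exp ((t : ℂ) • A) - NormedSpace.exp ((t : ℂ) • B)‖
        ≤ 2 ^ (1 - s) * t ^ s * ‖A - B‖ ^ s :=
  statement5_general H A B hA hB
end

section
/- Let 0 < τ < 1 and let ψ : ℝ → ℂ be a compactly supported differentiable function whose derivative ψ' is τ-Hölder continuous. Then there is a constant C (depending on ψ and τ) such that for all w ∈ ℝ with |w| ≥ 1, |∫_ℝ e^{iwx} ψ(x) dx| ≤ C / |w|^{1+τ}. -/
open MeasureTheory Complex
open scoped Real

/-!
Integration by parts gives `i w ∫ e^{iwx} ψ(x) dx = -∫ e^{iwx} ψ'(x) dx`, so it suffices that the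
Fourier integral of the compactly supported `τ`-Hölder function `ψ'` is `O(|w|^{-τ})`. Translating
by the half period `h = π / w` flips the sign of `e^{iwx}`, hence
`2 ∫ e^{iwx} ψ'(x) dx = ∫ e^{iwx} (ψ'(x) - ψ'(x + h)) dx`, whose integrand is bounded by `C |h|^τ`
and vanishes outside a fixed bounded set.
-/

lemma continuous_of_norm_sub_le_mul_abs_rpow {E : Type*} [SeminormedAddCommGroup E]
    {f : ℝ → E} {C τ : ℝ} (hτ : 0 < τ) (hf : ∀ x y, ‖f x - f y‖ ≤ C * |x - y| ^ τ) :
    Continuous f := by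
  refine continuous_iff_continuousAt.2 fun x => tendsto_iff_norm_sub_tendsto_zero.2 ?_
  have hlim : Filter.Tendsto (fun y => C * |y - x| ^ τ) (nhds x) (nhds (C * |x - x| ^ τ)) :=
    (((continuous_id.sub continuous_const).abs.rpow_const fun _ => Or.inr hτ.le).const_mul C).tendsto
      x
  rw [sub_self, abs_zero, Real.zero_rpow hτ.ne', mul_zero] at hlim
  exact squeeze_zero (fun _ => norm_nonneg _) (fun y => hf y x) hlim

lemma integrable_exp_I_mul {f : ℝ → ℂ} (hf : Integrable f) (w : ℝ) :
    Integrable fun x : ℝ => exp (I * w * x) * f x :=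
  hf.bdd_mul (c := 1) (by fun_prop) <| .of_forall fun x => by
    rw [mul_assoc, ← ofReal_mul, norm_exp_I_mul_ofReal]

lemma exp_I_mul_add_pi_div {w : ℝ} (hw : w ≠ 0) (x : ℝ) :
    exp (I * w * ↑(x + π / w)) = - exp (I * w * x) := by
  have hw' : (w : ℂ) ≠ 0 := ofReal_ne_zero.2 hw
  have : I * w * ↑(x + π / w) = I * w * x + π * I := by
    push_cast
    field_simp
  rw [this, exp_add, exp_pi_mul_I, mul_neg_one]

lemma integral_exp_I_mul_comp_add_pi_div (g : ℝ → ℂ) {w : ℝ} (hw : w ≠ 0) :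
    ∫ x : ℝ, exp (I * w * x) * g (x + π / w) = - ∫ x : ℝ, exp (I * w * x) * g x := by
  rw [← integral_add_right_eq_self (fun x : ℝ => exp (I * w * x) * g x) (π / w), ← integral_neg]
  simp only [exp_I_mul_add_pi_div hw, neg_mul, neg_neg]

lemma integral_exp_I_mul_deriv {f : ℝ → ℂ} (hf : Differentiable ℝ f)
    (hf' : Continuous (deriv f)) (hfc : HasCompactSupport f) (w : ℝ) :
    ∫ x : ℝ, exp (I * w * x) * deriv f x = - (I * w * ∫ x : ℝ, exp (I * w * x) * f x) := by
  have hexp : ∀ x : ℝ, HasDerivAt (fun x : ℝ => exp (I * w * x)) (I * w * exp (I * w * x)) x := by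
    intro x
    simpa [mul_comm] using (((hasDerivAt_id x).ofReal_comp).const_mul (I * (w : ℂ))).cexp
  have hint := integrable_exp_I_mul (hf.continuous.integrable_of_hasCompactSupport hfc) w
  rw [← integral_const_mul]
  refine integral_mul_deriv_eq_deriv_mul_of_integrable (fun x _ => hexp x)
    (fun x _ => (hf x).hasDerivAt)
    (integrable_exp_I_mul (hf'.integrable_of_hasCompactSupport hfc.deriv) w) ?_ hint |>.trans ?_
  · convert hint.const_mul (I * w) using 1
    ext x
    simp only [Pi.mul_apply, mul_assoc]
  · simp only [mul_assoc]

lemma norm_integral_le_of_eq_zero_of_lt_abs {F : ℝ → ℂ} {M r : ℝ} (hr : 0 ≤ r)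
    (hM : ∀ x, ‖F x‖ ≤ M) (hF : ∀ x, r < |x| → F x = 0) :
    ‖∫ x, F x‖ ≤ M * (2 * r) := by
  rw [← setIntegral_eq_integral_of_forall_compl_eq_zero (s := Metric.closedBall 0 r) fun x hx =>
    hF x (by simpa using hx)]
  calc _ ≤ M * volume.real (Metric.closedBall (0 : ℝ) r) :=
        norm_setIntegral_le_of_norm_le_const measure_closedBall_lt_top fun x _ => hM x
    _ = M * (2 * r) := by rw [Real.volume_real_closedBall hr]

lemma norm_integral_exp_I_mul_le_of_holder {g : ℝ → ℂ} {C τ R w : ℝ} (hg : Integrable g)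
    (hR : 0 ≤ R) (hgR : ∀ x, R ≤ |x| → g x = 0) (hC : ∀ x y, ‖g x - g y‖ ≤ C * |x - y| ^ τ)
    (hw : w ≠ 0) :
    ‖∫ x : ℝ, exp (I * w * x) * g x‖ ≤ C * (π / |w|) ^ τ * (R + π / |w|) := by
  set h := π / w
  have habs : |h| = π / |w| := by rw [abs_div, abs_of_pos Real.pi_pos]
  have htwice : 2 * ∫ x : ℝ, exp (I * w * x) * g x
      = ∫ x : ℝ, exp (I * w * x) * (g x - g (x + h)) := by
    simp only [mul_sub]
    rw [integral_sub (integrable_exp_I_mul hg w) (integrable_exp_I_mul (hg.comp_add_right h) w),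
      integral_exp_I_mul_comp_add_pi_div g hw]
    ring
  have hbound : ‖∫ x : ℝ, exp (I * w * x) * (g x - g (x + h))‖ ≤ C * |h| ^ τ * (2 * (R + |h|)) := by
    refine norm_integral_le_of_eq_zero_of_lt_abs (by positivity) (fun x => ?_) fun x hx => ?_
    · rw [norm_mul, mul_assoc, ← ofReal_mul, norm_exp_I_mul_ofReal, one_mul]
      simpa using hC x (x + h)
    · have hx' : R < |x + h| := by
        have := abs_sub_abs_le_abs_sub x (-h)
        rw [abs_neg, sub_neg_eq_add] at this
        linarith
      rw [hgR x (by linarith [abs_nonneg h]), hgR _ hx'.le, sub_zero, mul_zero]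
  rw [← habs]
  have := htwice ▸ hbound
  rw [norm_mul, RCLike.norm_ofNat] at this
  linarith

lemma exists_norm_integral_exp_I_mul_le_of_holder {g : ℝ → ℂ} {C τ : ℝ} (hτ : 0 < τ)
    (hg : HasCompactSupport g) (hC : ∀ x y, ‖g x - g y‖ ≤ C * |x - y| ^ τ) :
    ∃ K, ∀ w : ℝ, 1 ≤ |w| → ‖∫ x : ℝ, exp (I * w * x) * g x‖ ≤ K / |w| ^ τ := by
  obtain ⟨R, hR, hgR⟩ := hg.exists_pos_le_norm
  have hC0 : 0 ≤ C := (norm_nonneg _).trans (by simpa using hC 0 1)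
  have hgi : Integrable g :=
    (continuous_of_norm_sub_le_mul_abs_rpow hτ hC).integrable_of_hasCompactSupport hg
  refine ⟨C * π ^ τ * (R + π), fun w hw => ?_⟩
  have hw0 : 0 < |w| := by linarith
  calc _ ≤ C * (π / |w|) ^ τ * (R + π / |w|) :=
        norm_integral_exp_I_mul_le_of_holder hgi hR.le hgR hC (abs_pos.1 hw0)
    _ ≤ C * (π ^ τ / |w| ^ τ) * (R + π) := by
        rw [Real.div_rpow Real.pi_pos.le hw0.le]
        gcongr
        exact div_le_self Real.pi_pos.le hw
    _ = C * π ^ τ * (R + π) / |w| ^ τ := by ring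

theorem statement7_general
    (τ : ℝ) (hτ : 0 < τ)
    (ψ : ℝ → ℂ)
    (hψsupp : HasCompactSupport ψ)
    (hψdiff : Differentiable ℝ ψ)
    (hψhold : ∃ C : ℝ, ∀ x y : ℝ, ‖deriv ψ x - deriv ψ y‖ ≤ C * |x - y| ^ τ) :
    ∃ C : ℝ, ∀ w : ℝ, 1 ≤ |w| →
      ‖∫ x : ℝ, Complex.exp (I * w * x) * ψ x‖ ≤ C / |w| ^ (1 + τ) := by
  obtain ⟨C, hC⟩ := hψhold
  obtain ⟨K, hK⟩ := exists_norm_integral_exp_I_mul_le_of_holder hτ hψsupp.deriv hC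
  refine ⟨K, fun w hw => ?_⟩
  have hw0 : 0 < |w| := by linarith
  have hparts : |w| * ‖∫ x : ℝ, exp (I * w * x) * ψ x‖
      = ‖∫ x : ℝ, exp (I * w * x) * deriv ψ x‖ := by
    rw [integral_exp_I_mul_deriv hψdiff (continuous_of_norm_sub_le_mul_abs_rpow hτ hC) hψsupp,
      norm_neg, norm_mul, norm_mul, norm_I, one_mul, norm_real, Real.norm_eq_abs]
  calc _ = ‖∫ x : ℝ, exp (I * w * x) * deriv ψ x‖ / |w| := by
        rw [← hparts, mul_div_cancel_left₀ _ hw0.ne']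
    _ ≤ K / |w| ^ τ / |w| := by gcongr; exact hK w hw
    _ = K / |w| ^ (1 + τ) := by rw [Real.rpow_add hw0, Real.rpow_one, div_div, mul_comm]

/-- Fourier decay: if `ψ : ℝ → ℂ` is compactly supported and
differentiable with `τ`-Hölder continuous derivative (`0 < τ < 1`), then there is a
constant `C` such that `|∫ e^{iwx} ψ(x) dx| ≤ C / |w|^{1+τ}` for all `|w| ≥ 1`. -/
theorem statement7
    (τ : ℝ) (hτ : 0 < τ) (hτ1 : τ < 1)
    (ψ : ℝ → ℂ)
    (hψsupp : HasCompactSupport ψ)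
    (hψdiff : Differentiable ℝ ψ)
    (hψhold : ∃ C : ℝ, ∀ x y : ℝ, ‖deriv ψ x - deriv ψ y‖ ≤ C * |x - y| ^ τ) :
    ∃ C : ℝ, ∀ w : ℝ, 1 ≤ |w| →
      ‖∫ x : ℝ, Complex.exp (I * w * x) * ψ x‖ ≤ C / |w| ^ (1 + τ) :=
  statement7_general τ hτ ψ hψsupp hψdiff hψhold
end
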